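/- Let f be a submodular set function on a finite ground set N and let X ⊆ X' ⊆ Y' ⊆ Y ⊆ N. Then Σ_{u ∈ Y'∖X'} [(f(X' ∪ {u}) − f(X')) − (f(Y') − f(Y' ∖ {u}))] ≤ Σ_{u ∈ Y∖X} [(f(X' ∪ {u}) − f(X' ∖ {u})) − (f(Y' ∪ {u}) − f(Y' ∖ {u}))]. -/

import Mathlib

/-!
Submodularity applied to `X' ∖ {u} ⊆ Y' ∖ {u}` and the element `u` gives
`f(X' ∪ {u}) - f(X' ∖ {u}) ≥ f(Y' ∪ {u}) - f(Y' ∖ {u})` for every `u`, so every summand on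
the right is nonnegative. For `u ∈ Y' ∖ X'` it equals the summand on the left, and
`Y' ∖ X' ⊆ Y ∖ X`.
-/

open Finset

lemma Finset.insert_erase_eq_insert {α : Type*} [DecidableEq α] (a : α) (s : Finset α) :
    insert a (s.erase a) = insert a s := by
  by_cases h : a ∈ s
  · rw [insert_erase h, insert_eq_self.mpr h]
  · rw [erase_eq_of_notMem h]

section Submodular

variable {α β : Type*} [DecidableEq α] [Sub β] [LE β]

def IsSubmodular (f : Finset α → β) : Prop :=
  ∀ S T : Finset α, S ⊆ T → ∀ e ∉ T, f (insert e T) - f T ≤ f (insert e S) - f S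

lemma IsSubmodular.insert_sub_erase_antitone {f : Finset α → β} (hf : IsSubmodular f)
    {S T : Finset α} (hST : S ⊆ T) (u : α) :
    f (insert u T) - f (T.erase u) ≤ f (insert u S) - f (S.erase u) := by
  have h := hf (S.erase u) (T.erase u) (erase_subset_erase u hST) u (notMem_erase u T)
  rwa [insert_erase_eq_insert, insert_erase_eq_insert] at h

end Submodular

theorem stmt_17 {N : Type*} [DecidableEq N] (f : Finset N → ℝ)
    (hsub : ∀ S T : Finset N, S ⊆ T → ∀ e ∉ T,
      f (insert e T) - f T ≤ f (insert e S) - f S)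
    (X X' Y' Y : Finset N) (h1 : X ⊆ X') (h2 : X' ⊆ Y') (h3 : Y' ⊆ Y) :
    ∑ u ∈ Y' \ X', ((f (insert u X') - f X') - (f Y' - f (Y'.erase u))) ≤
      ∑ u ∈ Y \ X,
        ((f (insert u X') - f (X'.erase u)) - (f (insert u Y') - f (Y'.erase u))) := by
  have summand_eq : ∀ u ∈ Y' \ X',
      (f (insert u X') - f X') - (f Y' - f (Y'.erase u)) =
        (f (insert u X') - f (X'.erase u)) - (f (insert u Y') - f (Y'.erase u)) := by
    intro u hu
    rw [mem_sdiff] at hu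
    rw [erase_eq_of_notMem hu.2, insert_eq_self.mpr hu.1]
  rw [sum_congr rfl summand_eq]
  refine sum_le_sum_of_subset_of_nonneg (sdiff_subset_sdiff h3 h1) fun u _ _ => ?_
  exact sub_nonneg.mpr (IsSubmodular.insert_sub_erase_antitone hsub h2 u)
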